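/- For real s > 1: ∑_{l,m,n≥1} (l+m+n)^{-2} l^{-2} m^{-s} + 2 ∑_{l,m,n≥1} (l+m+n)^{-3} l^{-1} m^{-s} = ζ(2,2,s) - 2ζ(3,1,s) + ζ(2,s,2) + ζ(4,s) + ζ(2,2+s). -/

import Mathlib

/-!
Both sides come from `ζ(2) ζ(2, s)`, expanded in two ways. With `u` the index of `ζ(2)` and `v`
the larger index of `ζ(2, s)`, the partial fraction decomposition
`1/(u²v²) = 1/((u+v)²u²) + 2/((u+v)³u) + 1/((u+v)²v²) + 2/((u+v)³v)` turns the product into the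
left-hand side plus `ζ(2,2,s) + 2ζ(3,1,s)`. Comparing the index of `ζ(2)` with the two indices of
`ζ(2, s)` instead gives the harmonic product `2ζ(2,2,s) + ζ(2,s,2) + ζ(4,s) + ζ(2,2+s)`.
All terms are nonnegative, so both rearrangements are done in `ℝ≥0∞`; finiteness of
`ζ(2) ζ(2, s) ≤ ζ(2)² ζ(s)` for `s > 1` is needed only to pass back to real numbers.
-/

/-- The double zeta function `ζ(s₁, s₂) = ∑_{m₁ > m₂ > 0} m₁^{-s₁} m₂^{-s₂}`
with real arguments. -/
noncomputable def zr2 (s₁ s₂ : ℝ) : ℝ :=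
  ∑' (a : ℕ) (b : ℕ),
    ((a : ℝ) + (b : ℝ) + 2) ^ (-s₁) * ((b : ℝ) + 1) ^ (-s₂)

/-- The triple zeta function `ζ(s₁, s₂, s₃) = ∑_{m₁ > m₂ > m₃ > 0} ∏ m_j^{-s_j}`
with real arguments. -/
noncomputable def zr3 (s₁ s₂ s₃ : ℝ) : ℝ :=
  ∑' (a : ℕ) (b : ℕ) (c : ℕ),
    ((a : ℝ) + (b : ℝ) + (c : ℝ) + 3) ^ (-s₁) *
      ((b : ℝ) + (c : ℝ) + 2) ^ (-s₂) * ((c : ℝ) + 1) ^ (-s₃)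

open scoped ENNReal

section Summation

variable {α β γ : Type*}

theorem summable_of_tsum_ofReal_ne_top {f : α → ℝ} (hf : ∀ x, 0 ≤ f x)
    (h : ∑' x, ENNReal.ofReal (f x) ≠ ∞) : Summable f :=
  (ENNReal.summable_toReal h).congr fun x => ENNReal.toReal_ofReal (hf x)

theorem tsum_eq_toReal_tsum_ofReal {f : α → ℝ} (hf : ∀ x, 0 ≤ f x)
    (h : ∑' x, ENNReal.ofReal (f x) ≠ ∞) : ∑' x, f x = (∑' x, ENNReal.ofReal (f x)).toReal := by
  rw [← ENNReal.ofReal_tsum_of_nonneg hf (summable_of_tsum_ofReal_ne_top hf h),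
    ENNReal.toReal_ofReal (tsum_nonneg hf)]

theorem Summable.tsum_prod_prod {f : α × β × γ → ℝ} (h : Summable f) :
    ∑' x, f x = ∑' (a) (b) (c), f (a, b, c) := by
  rw [h.tsum_prod]
  exact tsum_congr fun a => (h.prod_factor a).tsum_prod

theorem tsum_indicator_eq_tsum_comp {M : Type*} [AddCommMonoid M] [TopologicalSpace M]
    {f : β → α} (hf : f.Injective) {R : Set α} (hR : Set.range f = R) (g : α → M) :
    ∑' y, R.indicator g y = ∑' x, g (f x) := by
  rw [← tsum_subtype, ← hR, tsum_range g hf]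

end Summation

noncomputable def zetaENN (p : ℝ) : ℝ≥0∞ := ∑' n : ℕ, ENNReal.ofReal (((n : ℝ) + 1) ^ (-p))

noncomputable def zeta2ENN (p q : ℝ) : ℝ≥0∞ :=
  ∑' x : ℕ × ℕ, ENNReal.ofReal (((x.1 : ℝ) + x.2 + 2) ^ (-p) * ((x.2 : ℝ) + 1) ^ (-q))

noncomputable def zeta3ENN (p q r : ℝ) : ℝ≥0∞ :=
  ∑' x : ℕ × ℕ × ℕ, ENNReal.ofReal (((x.1 : ℝ) + x.2.1 + x.2.2 + 3) ^ (-p) *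
    ((x.2.1 : ℝ) + x.2.2 + 2) ^ (-q) * ((x.2.2 : ℝ) + 1) ^ (-r))

noncomputable def zetaA3ENN (p q r : ℝ) : ℝ≥0∞ :=
  ∑' x : ℕ × ℕ × ℕ, ENNReal.ofReal (((x.1 : ℝ) + x.2.1 + x.2.2 + 3) ^ (-p) *
    ((x.1 : ℝ) + 1) ^ (-q) * ((x.2.1 : ℝ) + 1) ^ (-r))

theorem zr2_eq_toReal {p q : ℝ} (h : zeta2ENN p q ≠ ∞) : zr2 p q = (zeta2ENN p q).toReal := by
  rw [zr2, ← (summable_of_tsum_ofReal_ne_top (fun _ => by positivity) h).tsum_prod,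
    tsum_eq_toReal_tsum_ofReal (fun _ => by positivity) h]
  rfl

theorem zr3_eq_toReal {p q r : ℝ} (h : zeta3ENN p q r ≠ ∞) :
    zr3 p q r = (zeta3ENN p q r).toReal := by
  rw [zr3, ← (summable_of_tsum_ofReal_ne_top (fun _ => by positivity) h).tsum_prod_prod,
    tsum_eq_toReal_tsum_ofReal (fun _ => by positivity) h]
  rfl

theorem tsum_eq_toReal_zetaA3ENN {p q r : ℝ} (h : zetaA3ENN p q r ≠ ∞) :
    ∑' (l : ℕ) (m : ℕ) (n : ℕ), ((l : ℝ) + m + n + 3) ^ (-p) * ((l : ℝ) + 1) ^ (-q) *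
      ((m : ℝ) + 1) ^ (-r) = (zetaA3ENN p q r).toReal := by
  rw [← (summable_of_tsum_ofReal_ne_top (fun _ => by positivity) h).tsum_prod_prod,
    tsum_eq_toReal_tsum_ofReal (fun _ => by positivity) h]
  rfl

theorem zetaENN_ne_top {p : ℝ} (hp : 1 < p) : zetaENN p ≠ ∞ := by
  refine Summable.tsum_ofReal_ne_top (((Real.summable_one_div_nat_add_rpow 1 p).2 hp).congr
    fun n => ?_)
  rw [abs_of_pos (by positivity), one_div, Real.rpow_neg (by positivity)]

theorem zeta2ENN_le_zetaENN_mul_zetaENN {p : ℝ} (hp : 0 ≤ p) (q : ℝ) :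
    zeta2ENN p q ≤ zetaENN p * zetaENN q := by
  rw [zetaENN, zetaENN, ← ENNReal.tsum_mul_right, zeta2ENN, ENNReal.tsum_prod']
  refine ENNReal.tsum_le_tsum fun a => ?_
  rw [← ENNReal.tsum_mul_left]
  refine ENNReal.tsum_le_tsum fun b => ?_
  rw [← ENNReal.ofReal_mul (by positivity)]
  refine ENNReal.ofReal_le_ofReal (mul_le_mul_of_nonneg_right ?_ (by positivity))
  exact Real.rpow_le_rpow_of_nonpos (by positivity) (by linarith [Nat.cast_nonneg (α := ℝ) b])
    (by linarith)
theorem zetaENN_two_mul_zeta2ENN_ne_top {s : ℝ} (hs : 1 < s) : zetaENN 2 * zeta2ENN 2 s ≠ ∞ :=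
  ENNReal.mul_ne_top (zetaENN_ne_top one_lt_two) (ne_top_of_le_ne_top
    (ENNReal.mul_ne_top (zetaENN_ne_top one_lt_two) (zetaENN_ne_top hs))
    (zeta2ENN_le_zetaENN_mul_zetaENN zero_le_two s))

/-- `y = (j, m, n)` indexes the product `J^{-a} M^{-b} N^{-c}` of a term of `ζ(a)` and one of
`ζ(b, c)`, with `J = j + 1` and `M = m + n + 2 > N = n + 1`. -/
noncomputable def zetaProdTerm (a b c : ℝ) (y : ℕ × ℕ × ℕ) : ℝ≥0∞ :=
  ENNReal.ofReal (((y.1 : ℝ) + 1) ^ (-a)) *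
    ENNReal.ofReal (((y.2.1 : ℝ) + y.2.2 + 2) ^ (-b) * ((y.2.2 : ℝ) + 1) ^ (-c))

theorem zetaENN_mul_zeta2ENN_eq_tsum (a b c : ℝ) :
    zetaENN a * zeta2ENN b c = ∑' y, zetaProdTerm a b c y := by
  rw [zetaENN, ← ENNReal.tsum_mul_right, ENNReal.tsum_prod']
  exact tsum_congr fun j => ENNReal.tsum_mul_left.symm

theorem tsum_indicator_zetaProdTerm_first (a b c : ℝ) :
    ∑' y, {y : ℕ × ℕ × ℕ | y.2.1 + y.2.2 + 1 < y.1}.indicator (zetaProdTerm a b c) y =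
      zeta3ENN a b c := by
  rw [zeta3ENN, tsum_indicator_eq_tsum_comp
    (f := fun x : ℕ × ℕ × ℕ => (x.1 + x.2.1 + x.2.2 + 2, x.2.1, x.2.2))]
  · refine tsum_congr fun x => ?_
    rw [zetaProdTerm, ← ENNReal.ofReal_mul (by positivity)]
    push_cast
    ring_nf
  · rintro ⟨_, _, _⟩ ⟨_, _, _⟩ h
    simp only [Prod.mk.injEq] at h ⊢
    omega
  · ext ⟨j, m, n⟩
    simp only [Set.mem_range, Set.mem_ofPred_eq, Prod.exists, Prod.mk.injEq]
    constructor
    · rintro ⟨p, q, r, h, rfl, rfl⟩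
      omega
    · intro h
      exact ⟨j - m - n - 2, m, n, by omega, rfl, rfl⟩

theorem tsum_indicator_zetaProdTerm_mergeFirst (a b c : ℝ) :
    ∑' y, {y : ℕ × ℕ × ℕ | y.1 = y.2.1 + y.2.2 + 1}.indicator (zetaProdTerm a b c) y =
      zeta2ENN (a + b) c := by
  rw [zeta2ENN, tsum_indicator_eq_tsum_comp
    (f := fun x : ℕ × ℕ => (x.1 + x.2 + 1, x.1, x.2))]
  · refine tsum_congr fun x => ?_
    rw [zetaProdTerm, ← ENNReal.ofReal_mul (by positivity), neg_add,
      Real.rpow_add (by positivity)]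
    push_cast
    ring_nf
  · rintro ⟨_, _⟩ ⟨_, _⟩ h
    simp only [Prod.mk.injEq] at h ⊢
    omega
  · ext ⟨j, m, n⟩
    simp only [Set.mem_range, Set.mem_ofPred_eq, Prod.exists, Prod.mk.injEq]
    constructor
    · rintro ⟨p, q, h, rfl, rfl⟩
      omega
    · intro h
      exact ⟨m, n, by omega, rfl, rfl⟩

theorem tsum_indicator_zetaProdTerm_middle (a b c : ℝ) :
    ∑' y, {y : ℕ × ℕ × ℕ | y.2.2 < y.1 ∧ y.1 < y.2.1 + y.2.2 + 1}.indicator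
      (zetaProdTerm a b c) y = zeta3ENN b a c := by
  rw [zeta3ENN, tsum_indicator_eq_tsum_comp
    (f := fun x : ℕ × ℕ × ℕ => (x.2.1 + x.2.2 + 1, x.1 + x.2.1 + 1, x.2.2))]
  · refine tsum_congr fun x => ?_
    rw [zetaProdTerm, ← ENNReal.ofReal_mul (by positivity)]
    push_cast
    ring_nf
  · rintro ⟨_, _, _⟩ ⟨_, _, _⟩ h
    simp only [Prod.mk.injEq] at h ⊢
    omega
  · ext ⟨j, m, n⟩
    simp only [Set.mem_range, Set.mem_ofPred_eq, Prod.exists, Prod.mk.injEq]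
    constructor
    · rintro ⟨p, q, r, rfl, rfl, rfl⟩
      omega
    · intro h
      exact ⟨m + n - j, j - n - 1, n, by omega, by omega, rfl⟩

theorem tsum_indicator_zetaProdTerm_mergeLast (a b c : ℝ) :
    ∑' y, {y : ℕ × ℕ × ℕ | y.1 = y.2.2}.indicator (zetaProdTerm a b c) y =
      zeta2ENN b (a + c) := by
  rw [zeta2ENN, tsum_indicator_eq_tsum_comp (f := fun x : ℕ × ℕ => (x.2, x.1, x.2))]
  · refine tsum_congr fun x => ?_
    rw [zetaProdTerm, ← ENNReal.ofReal_mul (by positivity), neg_add,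
      Real.rpow_add (by positivity)]
    push_cast
    ring_nf
  · rintro ⟨_, _⟩ ⟨_, _⟩ h
    simp only [Prod.mk.injEq] at h ⊢
    omega
  · ext ⟨j, m, n⟩
    simp only [Set.mem_range, Set.mem_ofPred_eq, Prod.exists, Prod.mk.injEq]
    constructor
    · rintro ⟨p, q, rfl, rfl, rfl⟩
      rfl
    · rintro rfl
      exact ⟨m, j, rfl, rfl, rfl⟩

theorem tsum_indicator_zetaProdTerm_last (a b c : ℝ) :
    ∑' y, {y : ℕ × ℕ × ℕ | y.1 < y.2.2}.indicator (zetaProdTerm a b c) y =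
      zeta3ENN b c a := by
  rw [zeta3ENN, tsum_indicator_eq_tsum_comp
    (f := fun x : ℕ × ℕ × ℕ => (x.2.2, x.1, x.2.1 + x.2.2 + 1))]
  · refine tsum_congr fun x => ?_
    rw [zetaProdTerm, ← ENNReal.ofReal_mul (by positivity)]
    push_cast
    ring_nf
  · rintro ⟨_, _, _⟩ ⟨_, _, _⟩ h
    simp only [Prod.mk.injEq] at h ⊢
    omega
  · ext ⟨j, m, n⟩
    simp only [Set.mem_range, Set.mem_ofPred_eq, Prod.exists, Prod.mk.injEq]
    constructor
    · rintro ⟨p, q, r, rfl, rfl, rfl⟩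
      omega
    · intro h
      exact ⟨m, n - j - 1, j, rfl, rfl, by omega⟩

theorem zetaENN_mul_zeta2ENN (a b c : ℝ) :
    zetaENN a * zeta2ENN b c = zeta3ENN a b c + zeta2ENN (a + b) c + zeta3ENN b a c +
      zeta2ENN b (a + c) + zeta3ENN b c a := by
  have hsplit : ∀ y : ℕ × ℕ × ℕ, zetaProdTerm a b c y =
      {y : ℕ × ℕ × ℕ | y.2.1 + y.2.2 + 1 < y.1}.indicator (zetaProdTerm a b c) y +
      {y : ℕ × ℕ × ℕ | y.1 = y.2.1 + y.2.2 + 1}.indicator (zetaProdTerm a b c) y +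
      {y : ℕ × ℕ × ℕ | y.2.2 < y.1 ∧ y.1 < y.2.1 + y.2.2 + 1}.indicator (zetaProdTerm a b c) y +
      {y : ℕ × ℕ × ℕ | y.1 = y.2.2}.indicator (zetaProdTerm a b c) y +
      {y : ℕ × ℕ × ℕ | y.1 < y.2.2}.indicator (zetaProdTerm a b c) y := by
    intro y
    simp only [Set.indicator_apply, Set.mem_ofPred_eq]
    split_ifs <;> first | omega | simp
  rw [zetaENN_mul_zeta2ENN_eq_tsum, tsum_congr hsplit, ENNReal.tsum_add, ENNReal.tsum_add,
    ENNReal.tsum_add, ENNReal.tsum_add, tsum_indicator_zetaProdTerm_first,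
    tsum_indicator_zetaProdTerm_mergeFirst, tsum_indicator_zetaProdTerm_middle,
    tsum_indicator_zetaProdTerm_mergeLast, tsum_indicator_zetaProdTerm_last]

theorem rpow_neg_two_mul_rpow_neg_two {u v : ℝ} (hu : 0 < u) (hv : 0 < v) :
    u ^ (-2 : ℝ) * v ^ (-2 : ℝ) =
      (u + v) ^ (-2 : ℝ) * u ^ (-2 : ℝ) + 2 * ((u + v) ^ (-3 : ℝ) * u ^ (-1 : ℝ)) +
        ((u + v) ^ (-2 : ℝ) * v ^ (-2 : ℝ) + 2 * ((u + v) ^ (-3 : ℝ) * v ^ (-1 : ℝ))) := by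
  have huv : 0 < u + v := add_pos hu hv
  simp only [Real.rpow_neg hu.le, Real.rpow_neg hv.le, Real.rpow_neg huv.le, Real.rpow_ofNat,
    Real.rpow_one]
  field_simp
  ring

theorem zetaA3ENN_eq_tsum_swap (p q r : ℝ) :
    zetaA3ENN p q r = ∑' x : ℕ × ℕ × ℕ, ENNReal.ofReal (((x.1 : ℝ) + x.2.1 + x.2.2 + 3) ^ (-p) *
      ((x.1 : ℝ) + 1) ^ (-q) * ((x.2.2 : ℝ) + 1) ^ (-r)) := by
  rw [zetaA3ENN, ← ((Equiv.refl ℕ).prodCongr (Equiv.prodComm ℕ ℕ)).tsum_eq]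
  refine tsum_congr fun x => ?_
  simp only [Equiv.prodCongr_apply, Equiv.coe_refl, Prod.map_fst, Prod.map_snd, id_eq,
    Equiv.prodComm_apply, Prod.fst_swap, Prod.snd_swap]
  ring_nf

theorem zetaENN_two_mul_zeta2ENN_two (s : ℝ) :
    zetaENN 2 * zeta2ENN 2 s = zetaA3ENN 2 2 s + 2 * zetaA3ENN 3 1 s +
      (zeta3ENN 2 2 s + 2 * zeta3ENN 3 1 s) := by
  rw [zetaENN_mul_zeta2ENN_eq_tsum, zetaA3ENN_eq_tsum_swap, zetaA3ENN_eq_tsum_swap, zeta3ENN,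
    zeta3ENN, ← ENNReal.tsum_mul_left, ← ENNReal.tsum_mul_left, ← ENNReal.tsum_add,
    ← ENNReal.tsum_add, ← ENNReal.tsum_add]
  refine tsum_congr fun ⟨l, m, n⟩ => ?_
  have hsum : (l : ℝ) + m + n + 3 = (l + 1) + (m + n + 2) := by ring
  rw [zetaProdTerm, hsum, ← ENNReal.ofReal_mul (by positivity), ← ENNReal.ofReal_ofNat 2,
    ← ENNReal.ofReal_mul zero_le_two, ← ENNReal.ofReal_mul zero_le_two,
    ← ENNReal.ofReal_add (by positivity) (by positivity),
    ← ENNReal.ofReal_add (by positivity) (by positivity),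
    ← ENNReal.ofReal_add (by positivity) (by positivity)]
  congr 1
  linear_combination ((n : ℝ) + 1) ^ (-s) *
    rpow_neg_two_mul_rpow_neg_two (u := (l : ℝ) + 1) (v := (m : ℝ) + n + 2) (by positivity)
      (by positivity)

theorem functional_double_shuffle_case22 (s : ℝ) (hs : 1 < s) :
    (∑' (l : ℕ) (m : ℕ) (n : ℕ),
      ((l : ℝ) + (m : ℝ) + (n : ℝ) + 3) ^ (-(2 : ℝ)) *
        ((l : ℝ) + 1) ^ (-(2 : ℝ)) * ((m : ℝ) + 1) ^ (-s)) +
    2 * (∑' (l : ℕ) (m : ℕ) (n : ℕ),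
      ((l : ℝ) + (m : ℝ) + (n : ℝ) + 3) ^ (-(3 : ℝ)) *
        ((l : ℝ) + 1) ^ (-(1 : ℝ)) * ((m : ℝ) + 1) ^ (-s)) =
    zr3 2 2 s - 2 * zr3 3 1 s + zr3 2 s 2 + zr2 4 s + zr2 2 (2 + s) := by
  have hpf := zetaENN_two_mul_zeta2ENN_two s
  have hst := zetaENN_mul_zeta2ENN 2 2 s
  rw [show (2 : ℝ) + 2 = 4 by norm_num] at hst
  have hpf_fin := hpf ▸ zetaENN_two_mul_zeta2ENN_ne_top hs
  have hst_fin := hst ▸ zetaENN_two_mul_zeta2ENN_ne_top hs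
  simp only [ne_eq, ENNReal.add_eq_top, ENNReal.mul_eq_top, OfNat.ofNat_ne_zero,
    ENNReal.ofNat_ne_top, not_false_eq_true, true_and, false_and, or_false, not_or]
    at hpf_fin hst_fin
  obtain ⟨⟨hA22, hA31⟩, hZ22, hZ31⟩ := hpf_fin
  obtain ⟨⟨⟨⟨-, hZ4⟩, -⟩, hZ2⟩, hZs2⟩ := hst_fin
  have hreal := congrArg ENNReal.toReal (hpf.symm.trans hst)
  simp only [ENNReal.toReal_add, ENNReal.toReal_mul, ENNReal.toReal_ofNat, ENNReal.add_eq_top,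
    ENNReal.mul_eq_top, ne_eq, OfNat.ofNat_ne_zero, ENNReal.ofNat_ne_top, not_false_eq_true,
    true_and, false_and, or_self, *] at hreal
  rw [tsum_eq_toReal_zetaA3ENN hA22, tsum_eq_toReal_zetaA3ENN hA31, zr3_eq_toReal hZ22,
    zr3_eq_toReal hZ31, zr3_eq_toReal hZs2, zr2_eq_toReal hZ4, zr2_eq_toReal hZ2]
  linarith
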